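/- arXiv:2001.03815 — 2 statements merged into one kernel-verified Lean document; each statement's English description precedes it below -/
import Mathlib

section
/- For complex numbers a, b with b not a non-positive integer, and all complex x, y, the confluent hypergeometric function satisfies the addition formula: ₁F₁(a; b; x+y) = e^x · Σ_{j=0}^∞ [(b−a)_j / (b)_j] · ((−x)^j / j!) · ₁F₁(a; b+j; y), where (c)_j denotes the Pochhammer symbol (ascending factorial) and ₁F₁(a;b;z) = Σ_{i=0}^∞ (a)_i z^i / ((b)_i i!). -/
open scoped BigOperators Nat

/-- Pochhammer symbol (ascending factorial) `(a)_n`. -/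
noncomputable def poch (a : ℂ) (n : ℕ) : ℂ := ∏ k ∈ Finset.range n, (a + (k : ℂ))

/-- Generalized hypergeometric series with numerator list `a`, denominator list `b`. -/
noncomputable def hyp (a b : List ℂ) (z : ℂ) : ℂ :=
  ∑' i : ℕ, ((a.map (fun c => poch c i)).prod / (b.map (fun c => poch c i)).prod)
    * z ^ i / (Nat.factorial i : ℂ)

/-- Partial sums `u_m = j₁ + ⋯ + j_m` of a `p`-tuple of nonnegative integers. -/
def U (p : ℕ) (j : Fin p → ℕ) (m : ℕ) : ℕ :=
  ∑ r ∈ Finset.range m, if h : r < p then j ⟨r, h⟩ else 0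


set_option maxHeartbeats 1000000

private lemma poch_zero (a : ℂ) : poch a 0 = 1 := by simp [poch]

private lemma poch_succ (a : ℂ) (n : ℕ) : poch a (n + 1) = poch a n * (a + n) :=
  Finset.prod_range_succ _ _

private lemma poch_succ' (a : ℂ) (n : ℕ) : poch a (n + 1) = a * poch (a + 1) n := by
  rw [poch, Finset.prod_range_succ', poch]
  have h : ∀ k ∈ Finset.range n, a + ((k + 1 : ℕ) : ℂ) = (a + 1) + (k : ℂ) := by
    intro k _; push_cast; ring
  rw [Finset.prod_congr rfl h]
  simp [mul_comm]

private lemma poch_add (a : ℂ) (m n : ℕ) : poch a (m + n) = poch a m * poch (a + (m : ℂ)) n := by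
  induction n with
  | zero => simp [poch_zero]
  | succ n ih =>
      rw [show m + (n + 1) = (m + n) + 1 from rfl, poch_succ, ih, poch_succ, mul_assoc]
      push_cast
      ring

private lemma poch_ne_zero {b : ℂ} (hb : ∀ n : ℕ, b ≠ -(n : ℂ)) (n : ℕ) : poch b n ≠ 0 := by
  rw [poch]
  refine Finset.prod_ne_zero_iff.mpr fun k _ h => hb k ?_
  linear_combination h

private lemma poch_norm_le (c : ℂ) (n : ℕ) : ‖poch c n‖ ≤ (max 1 ‖c‖) ^ n * (n ! : ℝ) := by
  induction n with
  | zero => simp [poch_zero]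
  | succ n ih =>
    rw [poch_succ, norm_mul]
    have h2 : ‖(n : ℂ)‖ = (n : ℝ) := by simp
    have h3 : ‖c‖ ≤ max 1 ‖c‖ := le_max_right _ _
    have h4 : (1:ℝ) ≤ max 1 ‖c‖ := le_max_left _ _
    have h1 : ‖c + (n:ℂ)‖ ≤ max 1 ‖c‖ * ((n:ℝ)+1) := by
      have h5 := norm_add_le c (n:ℂ)
      rw [h2] at h5
      nlinarith [Nat.cast_nonneg (α := ℝ) n]
    calc ‖poch c n‖ * ‖c + (n:ℂ)‖
        ≤ ((max 1 ‖c‖)^n * (n ! : ℝ)) * (max 1 ‖c‖ * ((n:ℝ)+1)) := by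
          apply mul_le_mul ih h1 (norm_nonneg _) (by positivity)
      _ = (max 1 ‖c‖)^(n+1) * ((n+1)! : ℝ) := by
          rw [Nat.factorial_succ]; push_cast; ring

private lemma pascal_sum (g : ℕ → ℂ) (m : ℕ) :
    ∑ j ∈ Finset.range (m + 2), (-1 : ℂ) ^ j * ((m + 1).choose j : ℂ) * g j
      = ∑ j ∈ Finset.range (m + 1), (-1 : ℂ) ^ j * (m.choose j : ℂ) * g j
        + ∑ j ∈ Finset.range (m + 1), (-1 : ℂ) ^ (j + 1) * (m.choose j : ℂ) * g (j + 1) := by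
  rw [Finset.sum_range_succ' (fun j => (-1 : ℂ) ^ j * ((m + 1).choose j : ℂ) * g j) (m + 1)]
  have h1 : ∀ j ∈ Finset.range (m + 1), (-1:ℂ)^(j+1) * ((m+1).choose (j+1) : ℂ) * g (j+1)
      = (-1:ℂ)^(j+1) * (m.choose j : ℂ) * g (j+1)
        + (-1:ℂ)^(j+1) * (m.choose (j+1) : ℂ) * g (j+1) := by
    intro j _; rw [Nat.choose_succ_succ]; push_cast; ring
  rw [Finset.sum_congr rfl h1, Finset.sum_add_distrib]
  have h2 : ∑ j ∈ Finset.range (m + 1), (-1:ℂ)^j * (m.choose j : ℂ) * g j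
      = ∑ j ∈ Finset.range m, (-1:ℂ)^(j+1) * (m.choose (j+1) : ℂ) * g (j+1) + g 0 := by
    rw [Finset.sum_range_succ' (fun j => (-1 : ℂ) ^ j * (m.choose j : ℂ) * g j) m]
    simp
  have h3 : ∑ j ∈ Finset.range (m + 1), (-1:ℂ)^(j+1) * (m.choose (j+1) : ℂ) * g (j+1)
      = ∑ j ∈ Finset.range m, (-1:ℂ)^(j+1) * (m.choose (j+1) : ℂ) * g (j+1) := by
    rw [Finset.sum_range_succ]
    simp
  rw [h2, h3]
  simp
  ring

private lemma vand : ∀ (m : ℕ) (c d : ℂ),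
    ∑ j ∈ Finset.range (m + 1),
      (-1 : ℂ) ^ j * (m.choose j : ℂ) * poch (c - d) j * poch (c + (j : ℂ)) (m - j)
      = poch d m := by
  intro m
  induction m with
  | zero => intro c d; simp [poch_zero]
  | succ m ih =>
    intro c d
    have hshape : ∀ j ∈ Finset.range (m + 2),
        (-1 : ℂ) ^ j * ((m+1).choose j : ℂ) * poch (c - d) j * poch (c + (j : ℂ)) (m + 1 - j)
        = (-1 : ℂ) ^ j * ((m+1).choose j : ℂ) *
            (poch (c - d) j * poch (c + (j : ℂ)) (m + 1 - j)) := by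
      intro j _; ring
    rw [show m + 1 + 1 = m + 2 from rfl, Finset.sum_congr rfl hshape,
      pascal_sum (fun j => poch (c - d) j * poch (c + (j : ℂ)) (m + 1 - j)) m,
      ← Finset.sum_add_distrib]
    have hterm : ∀ j ∈ Finset.range (m + 1),
        (-1:ℂ)^j * (m.choose j : ℂ) * (poch (c-d) j * poch (c + (j:ℂ)) (m + 1 - j))
          + (-1:ℂ)^(j+1) * (m.choose j : ℂ) *
            (poch (c-d) (j+1) * poch (c + ((j+1 : ℕ):ℂ)) (m + 1 - (j+1)))
        = d * ((-1:ℂ)^j * (m.choose j : ℂ) * poch ((c+1) - (d+1)) j *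
            poch ((c+1) + (j:ℂ)) (m - j)) := by
      intro j hj
      have hjm : j ≤ m := by simpa using Nat.lt_succ_iff.mp (Finset.mem_range.mp hj)
      have e1 : m + 1 - j = (m - j) + 1 := by omega
      have e2 : m + 1 - (j + 1) = m - j := by omega
      have e3 : ((j + 1 : ℕ) : ℂ) = (j : ℂ) + 1 := by push_cast; ring
      have e4 : (c + 1) - (d + 1) = c - d := by ring
      have e5 : (c + 1) + (j : ℂ) = (c + (j:ℂ)) + 1 := by ring
      rw [e1, e2, e3, e4, e5, poch_succ' (c + (j:ℂ)) (m - j), poch_succ (c - d) j,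
        show c + ((j:ℂ) + 1) = (c + (j:ℂ)) + 1 by ring]
      ring
    rw [Finset.sum_congr rfl hterm, ← Finset.mul_sum, ih (c+1) (d+1), ← poch_succ']

private lemma poch_lb {b : ℂ} (hb : ∀ n : ℕ, b ≠ -(n : ℂ)) :
    ∃ M : ℝ, 0 < M ∧ ∀ n : ℕ, (n ! : ℝ) ≤ M * 4 ^ n * ‖poch b n‖ := by
  set N : ℕ := ⌈2 * ‖b‖⌉₊ + 1 with hN
  have hpos : ∀ n : ℕ, 0 < ‖poch b n‖ := fun n => norm_pos_iff.mpr (poch_ne_zero hb n)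
  set M : ℝ := (∑ n ∈ Finset.range (N + 1), (n ! : ℝ) / (4 ^ n * ‖poch b n‖)) + 1 with hM
  have hsumnn : (0:ℝ) ≤ ∑ n ∈ Finset.range (N + 1), (n ! : ℝ) / (4 ^ n * ‖poch b n‖) :=
    Finset.sum_nonneg fun i _ => by positivity
  have hMpos : 0 < M := by rw [hM]; linarith
  have hsmall : ∀ n, n ≤ N → (n ! : ℝ) ≤ M * 4 ^ n * ‖poch b n‖ := by
    intro n hn
    have h1 : (n ! : ℝ) / (4 ^ n * ‖poch b n‖) ≤ M := by
      have := Finset.single_le_sum (f := fun n : ℕ => (n ! : ℝ) / (4 ^ n * ‖poch b n‖))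
        (fun i _ => by positivity) (Finset.mem_range.mpr (by omega : n < N + 1))
      rw [hM]; linarith
    have h2 : (0:ℝ) < 4 ^ n * ‖poch b n‖ := mul_pos (by positivity) (hpos n)
    calc (n ! : ℝ) = ((n ! : ℝ) / (4 ^ n * ‖poch b n‖)) * (4 ^ n * ‖poch b n‖) :=
          (div_mul_cancel₀ _ h2.ne').symm
      _ ≤ M * (4 ^ n * ‖poch b n‖) := mul_le_mul_of_nonneg_right h1 h2.le
      _ = M * 4 ^ n * ‖poch b n‖ := by ring
  refine ⟨M, hMpos, ?_⟩
  intro n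
  induction n with
  | zero => simpa using hsmall 0 (by omega)
  | succ n ih =>
    by_cases hle : n + 1 ≤ N
    · exact hsmall _ hle
    · have hn : N ≤ n := by omega
      have hb4 : ((n:ℝ) + 1) ≤ 4 * ‖b + (n:ℂ)‖ := by
        have h1 : 2 * ‖b‖ ≤ (⌈2 * ‖b‖⌉₊ : ℝ) := Nat.le_ceil _
        have h2 : (N : ℝ) ≤ (n : ℝ) := Nat.cast_le.mpr hn
        have h3 : (N : ℝ) = (⌈2 * ‖b‖⌉₊ : ℝ) + 1 := by rw [hN]; push_cast; ring
        have h4 : (n : ℝ) - ‖b‖ ≤ ‖b + (n:ℂ)‖ := by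
          have h5 : ‖(n:ℂ)‖ ≤ ‖b + (n:ℂ)‖ + ‖b‖ := by
            calc ‖(n:ℂ)‖ = ‖(b + (n:ℂ)) - b‖ := by ring_nf
              _ ≤ ‖b + (n:ℂ)‖ + ‖b‖ := norm_sub_le _ _
          have h6 : ‖(n:ℂ)‖ = (n:ℝ) := by simp
          linarith
        linarith
      have hpoch : ‖poch b (n+1)‖ = ‖poch b n‖ * ‖b + (n:ℂ)‖ := by
        rw [poch_succ, norm_mul]
      calc ((n+1)! : ℝ) = ((n:ℝ) + 1) * (n ! : ℝ) := by
            rw [Nat.factorial_succ]; push_cast; ring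
        _ ≤ (4 * ‖b + (n:ℂ)‖) * (M * 4 ^ n * ‖poch b n‖) :=
            mul_le_mul hb4 ih (by positivity) (by positivity)
        _ = M * 4 ^ (n+1) * ‖poch b (n+1)‖ := by rw [hpoch]; ring

private lemma hyp_one (u v z : ℂ) :
    hyp [u] [v] z = ∑' i : ℕ, poch u i / poch v i * z ^ i / (i ! : ℂ) := by
  simp [hyp]

private lemma fact_ne (k : ℕ) : ((k ! : ℕ) : ℂ) ≠ 0 :=
  Nat.cast_ne_zero.mpr (Nat.factorial_ne_zero k)

private lemma frac_id (u v w p c s B q r f1 f2 f3 fm : ℂ)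
    (hB : B ≠ 0) (hq : q ≠ 0) (hr : r ≠ 0) (hf1 : f1 ≠ 0) (hf2 : f2 ≠ 0)
    (hf3 : f3 ≠ 0) (hfm : fm ≠ 0) :
    u / f3 * (c / B * (s * v / f1) * (p / q * w / f2))
      = u * v * w * p / (B * q * r * fm * f2) * (s * (fm / (f1 * f3)) * c * r) := by
  have h1 : u / f3 * (c / B * (s * v / f1) * (p / q * w / f2))
      = (u * c * s * v * p * w) / (f3 * B * f1 * q * f2) := by ring
  have h2 : u * v * w * p / (B * q * r * fm * f2) * (s * (fm / (f1 * f3)) * c * r)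
      = (u * v * w * p * s * c * fm * r) / (B * q * r * fm * f2 * (f1 * f3)) := by ring
  rw [h1, h2, div_eq_div_iff (by simp [hf3, hB, hf1, hq, hf2])
    (by simp [hB, hq, hr, hfm, hf2, hf1, hf3])]
  ring

private lemma frac_id2 (X Y P Q B fm fi : ℂ) (hB : B ≠ 0) (h1 : fm ≠ 0) (h2 : fi ≠ 0) :
    X * Y * P / (B * fm * fi) * Q = P * Q / B * (X * Y) / (fm * fi) := by
  field_simp

theorem oneFone_addition (a b : ℂ) (hb : ∀ n : ℕ, b ≠ -(n : ℂ)) (x y : ℂ) :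
    hyp [a] [b] (x + y) =
      Complex.exp x * ∑' j : ℕ,
        (poch (b - a) j / poch b j) * ((-x) ^ j / (Nat.factorial j : ℂ)) *
          hyp [a] [b + (j : ℂ)] y := by
  classical
  obtain ⟨M, hMpos, hMb⟩ := poch_lb hb
  have hBne : ∀ n, poch b n ≠ 0 := poch_ne_zero hb
  have hBpos : ∀ n, 0 < ‖poch b n‖ := fun n => norm_pos_iff.mpr (hBne n)
  have hBinv : ∀ n : ℕ, ‖poch b n‖⁻¹ ≤ M * 4 ^ n / (n ! : ℝ) := by
    intro n
    rw [inv_eq_one_div, div_le_div_iff₀ (hBpos n) (by positivity : (0:ℝ) < (n ! : ℝ)), one_mul]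
    exact hMb n
  set Na : ℝ := max 1 ‖a‖ with hNa
  set Nc : ℝ := max 1 ‖b - a‖ with hNc
  have hNa0 : (0:ℝ) < Na := lt_of_lt_of_le one_pos (le_max_left _ _)
  have hNc0 : (0:ℝ) < Nc := lt_of_lt_of_le one_pos (le_max_left _ _)
  set E : ℕ → ℂ := fun k => x ^ k / (k ! : ℂ) with hE
  set T : ℕ × ℕ → ℂ := fun p =>
    poch (b - a) p.1 / poch b p.1 * ((-x) ^ p.1 / (p.1 ! : ℂ)) *
      (poch a p.2 / poch (b + (p.1 : ℂ)) p.2 * y ^ p.2 / (p.2 ! : ℂ)) with hT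
  set L : ℕ × ℕ → ℂ := fun p =>
    poch a (p.1 + p.2) / poch b (p.1 + p.2) * (x ^ p.1 * y ^ p.2) /
      ((p.1 ! : ℂ) * (p.2 ! : ℂ)) with hL
  have hBJne : ∀ j i : ℕ, poch (b + (j:ℂ)) i ≠ 0 := by
    intro j i h
    exact hBne (j + i) (by rw [poch_add, h, mul_zero])
  -- norm bound for T
  have hfle : ∀ j i : ℕ, ((j ! * i ! : ℕ) : ℝ) ≤ (((j+i)! : ℕ) : ℝ) := fun j i =>
    Nat.cast_le.mpr (Nat.le_of_dvd (Nat.factorial_pos _)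
      (Nat.factorial_mul_factorial_dvd_factorial_add j i))
  have hTnorm : ∀ p : ℕ × ℕ, ‖T p‖ ≤
      M * ((4*Nc*‖x‖) ^ p.1 / (p.1 ! : ℝ)) * ((4*Na*‖y‖) ^ p.2 / (p.2 ! : ℝ)) := by
    rintro ⟨j, i⟩
    have hTval : T (j, i) = poch (b-a) j * poch a i * (-x)^j * y^i /
        (poch b (j+i) * (j ! : ℂ) * (i ! : ℂ)) := by
      simp only [hT]
      rw [poch_add b j i]
      field_simp
    have hnum : ‖poch (b-a) j * poch a i * (-x)^j * y^i‖
        = ‖poch (b-a) j‖ * ‖poch a i‖ * ‖x‖^j * ‖y‖^i := by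
      rw [norm_mul, norm_mul, norm_mul, norm_pow, norm_pow, norm_neg]
    have hden : ‖poch b (j+i) * (j ! : ℂ) * (i ! : ℂ)‖
        = ‖poch b (j+i)‖ * (j ! : ℝ) * (i ! : ℝ) := by
      rw [norm_mul, norm_mul]
      simp
    rw [hTval, norm_div, hnum, hden]
    have hb1 := poch_norm_le (b - a) j
    have hb2 := poch_norm_le a i
    calc ‖poch (b-a) j‖ * ‖poch a i‖ * ‖x‖^j * ‖y‖^i /
          (‖poch b (j+i)‖ * (j ! : ℝ) * (i ! : ℝ))
        ≤ (Nc^j * (j ! : ℝ)) * (Na^i * (i ! : ℝ)) * ‖x‖^j * ‖y‖^i /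
          (‖poch b (j+i)‖ * (j ! : ℝ) * (i ! : ℝ)) := by
          gcongr <;> first | exact hb1 | exact hb2
      _ = (Nc^j * Na^i * ‖x‖^j * ‖y‖^i) / ‖poch b (j+i)‖ := by
          have h1 : (j ! : ℝ) ≠ 0 := by positivity
          have h2 : (i ! : ℝ) ≠ 0 := by positivity
          rw [div_eq_div_iff (by exact mul_ne_zero (mul_ne_zero (hBpos (j+i)).ne' h1) h2)
            (hBpos (j+i)).ne']
          ring
      _ = (Nc^j * Na^i * ‖x‖^j * ‖y‖^i) * ‖poch b (j+i)‖⁻¹ := by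
          rw [div_eq_mul_inv]
      _ ≤ (Nc^j * Na^i * ‖x‖^j * ‖y‖^i) * (M * 4 ^ (j+i) / ((j+i)! : ℝ)) := by
          gcongr
          exact hBinv (j+i)
      _ = (M * (4*Nc*‖x‖)^j * (4*Na*‖y‖)^i) / (((j+i)! : ℕ) : ℝ) := by
          push_cast
          ring
      _ ≤ (M * (4*Nc*‖x‖)^j * (4*Na*‖y‖)^i) / ((j ! * i ! : ℕ) : ℝ) := by
          gcongr
          exact_mod_cast hfle j i
      _ = M * ((4*Nc*‖x‖) ^ j / (j ! : ℝ)) * ((4*Na*‖y‖) ^ i / (i ! : ℝ)) := by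
          push_cast
          ring
  -- norm bound for L
  have hLnorm : ∀ p : ℕ × ℕ, ‖L p‖ ≤
      M * ((4*Na*‖x‖) ^ p.1 / (p.1 ! : ℝ)) * ((4*Na*‖y‖) ^ p.2 / (p.2 ! : ℝ)) := by
    rintro ⟨m, i⟩
    have hLval : L (m, i) = poch a (m+i) * x^m * y^i /
        (poch b (m+i) * (m ! : ℂ) * (i ! : ℂ)) := by
      simp only [hL]
      field_simp
    have hnum : ‖poch a (m+i) * x^m * y^i‖ = ‖poch a (m+i)‖ * ‖x‖^m * ‖y‖^i := by
      rw [norm_mul, norm_mul, norm_pow, norm_pow]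
    have hden : ‖poch b (m+i) * (m ! : ℂ) * (i ! : ℂ)‖
        = ‖poch b (m+i)‖ * (m ! : ℝ) * (i ! : ℝ) := by
      rw [norm_mul, norm_mul]; simp
    rw [hLval, norm_div, hnum, hden]
    have hb2 := poch_norm_le a (m+i)
    have f1 : ((m ! : ℕ) : ℝ) ≠ 0 := by positivity
    have f2 : ((i ! : ℕ) : ℝ) ≠ 0 := by positivity
    have f3 : (((m+i)! : ℕ) : ℝ) ≠ 0 := by positivity
    calc ‖poch a (m+i)‖ * ‖x‖^m * ‖y‖^i / (‖poch b (m+i)‖ * (m ! : ℝ) * (i ! : ℝ))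
        ≤ (Na^(m+i) * (((m+i))! : ℝ)) * ‖x‖^m * ‖y‖^i /
            (‖poch b (m+i)‖ * (m ! : ℝ) * (i ! : ℝ)) := by
          gcongr <;> first | exact hb2 | skip
      _ = (Na^(m+i) * (((m+i))! : ℝ) * ‖x‖^m * ‖y‖^i / ((m ! : ℝ) * (i ! : ℝ)))
            * ‖poch b (m+i)‖⁻¹ := by
          rw [div_eq_mul_inv, div_eq_mul_inv, mul_inv, mul_inv]
          ring
      _ ≤ (Na^(m+i) * (((m+i))! : ℝ) * ‖x‖^m * ‖y‖^i / ((m ! : ℝ) * (i ! : ℝ)))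
            * (M * 4 ^ (m+i) / (((m+i))! : ℝ)) := by
          gcongr
          exact hBinv (m+i)
      _ = M * ((4*Na*‖x‖) ^ m / (m ! : ℝ)) * ((4*Na*‖y‖) ^ i / (i ! : ℝ)) := by
          have g1 : (0:ℝ) < ((m ! : ℕ) : ℝ) := by exact_mod_cast Nat.factorial_pos m
          have g2 : (0:ℝ) < ((i ! : ℕ) : ℝ) := by exact_mod_cast Nat.factorial_pos i
          have g3 : (0:ℝ) < (((m+i)! : ℕ) : ℝ) := by exact_mod_cast Nat.factorial_pos (m+i)
          rw [div_mul_div_comm]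
          rw [show M * ((4*Na*‖x‖) ^ m / (m ! : ℝ)) * ((4*Na*‖y‖) ^ i / (i ! : ℝ))
              = (M * (4*Na*‖x‖) ^ m * (4*Na*‖y‖) ^ i) / ((m ! : ℝ) * (i ! : ℝ)) by
            ring]
          rw [div_eq_div_iff (by exact (mul_pos (mul_pos g1 g2) g3).ne') (by exact (mul_pos g1 g2).ne')]
          ring
  -- summability
  have hc1 : (0:ℝ) ≤ 4 * Nc * ‖x‖ :=
    mul_nonneg (mul_nonneg (by norm_num) hNc0.le) (norm_nonneg x)
  have hc2 : (0:ℝ) ≤ 4 * Na * ‖y‖ :=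
    mul_nonneg (mul_nonneg (by norm_num) hNa0.le) (norm_nonneg y)
  have hc3 : (0:ℝ) ≤ 4 * Na * ‖x‖ :=
    mul_nonneg (mul_nonneg (by norm_num) hNa0.le) (norm_nonneg x)
  have hsumR : ∀ c1 c2 : ℝ, 0 ≤ c1 → 0 ≤ c2 → Summable (fun p : ℕ × ℕ =>
      M * (c1 ^ p.1 / (p.1 ! : ℝ)) * (c2 ^ p.2 / (p.2 ! : ℝ))) := by
    intro c1 c2 hc1 hc2
    have h1 : Summable (fun m : ℕ => M * (c1 ^ m / (m ! : ℝ))) :=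
      (Real.summable_pow_div_factorial c1).mul_left M
    have h2 := Real.summable_pow_div_factorial c2
    exact h1.mul_of_nonneg h2
      (fun m => mul_nonneg hMpos.le (by positivity))
      (fun i => by positivity)
  have hTsum : Summable T :=
    Summable.of_norm_bounded (hsumR _ _ hc1 hc2) hTnorm
  have hLsum : Summable L :=
    Summable.of_norm_bounded (hsumR _ _ hc3 hc2) hLnorm
  have hEnorm : Summable (fun k : ℕ => ‖E k‖) := by
    have hval : ∀ k : ℕ, ‖E k‖ = ‖x‖^k / (k ! : ℝ) := by
      intro k
      simp only [hE]
      rw [norm_div, norm_pow]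
      simp
    exact (Real.summable_pow_div_factorial ‖x‖).congr fun k => (hval k).symm
  have hTrow : ∀ i : ℕ, Summable (fun j : ℕ => ‖T (j, i)‖) := by
    intro i
    have hbd : ∀ j : ℕ, ‖T (j, i)‖ ≤
        M * ((4*Nc*‖x‖) ^ j / (j ! : ℝ)) * ((4*Na*‖y‖) ^ i / (i ! : ℝ)) :=
      fun j => hTnorm (j, i)
    exact Summable.of_nonneg_of_le (fun j => norm_nonneg _) hbd
      (((Real.summable_pow_div_factorial _).mul_left M).mul_right _)
  -- exp expansion
  have hexp : Complex.exp x = ∑' k : ℕ, E k := by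
    simp only [hE]
    rw [Complex.exp_eq_exp_ℂ, NormedSpace.exp_eq_tsum_div]
  -- RHS per-j
  have hRj : ∀ j : ℕ, poch (b - a) j / poch b j * ((-x) ^ j / (j ! : ℂ)) *
      hyp [a] [b + (j:ℂ)] y = ∑' i : ℕ, T (j, i) := by
    intro j
    rw [hyp_one, ← tsum_mul_left]
  have hstep1 : (∑' j : ℕ, poch (b - a) j / poch b j * ((-x) ^ j / (j ! : ℂ)) *
      hyp [a] [b + (j:ℂ)] y) = ∑' i : ℕ, ∑' j : ℕ, T (j, i) := by
    have hTsum' : Summable (Function.uncurry fun j i : ℕ => T (j, i)) := hTsum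
    exact (tsum_congr hRj).trans
      (Summable.tsum_comm (f := fun j i : ℕ => T (j, i)) hTsum').symm
  have hstep2 : ∀ i : ℕ, Complex.exp x * (∑' j : ℕ, T (j, i))
      = ∑' m : ℕ, ∑ kl ∈ Finset.HasAntidiagonal.antidiagonal m, E kl.1 * T (kl.2, i) := by
    intro i
    rw [hexp]
    exact tsum_mul_tsum_eq_tsum_sum_antidiagonal_of_summable_norm hEnorm (hTrow i)
  -- LHS expansion
  have hL1 : hyp [a] [b] (x + y) = ∑' n : ℕ, ∑ p ∈ Finset.HasAntidiagonal.antidiagonal n, L p := by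
    rw [hyp_one]
    refine tsum_congr fun n => ?_
    rw [Finset.Nat.sum_antidiagonal_eq_sum_range_succ_mk, add_pow, Finset.mul_sum,
      Finset.sum_div]
    refine Finset.sum_congr rfl fun k hk => ?_
    have hkn : k ≤ n := Nat.lt_succ_iff.mp (Finset.mem_range.mp hk)
    simp only [hL]
    rw [Nat.add_sub_cancel' hkn, Nat.cast_choose ℂ hkn]
    have hfn := fact_ne n
    have hfk := fact_ne k
    have hfnk := fact_ne (n - k)
    field_simp [hBne n]
  have hL2 : (∑' n : ℕ, ∑ p ∈ Finset.HasAntidiagonal.antidiagonal n, L p) = ∑' p : ℕ × ℕ, L p := by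
    have hσ : Summable fun σ : (Σ n : ℕ, { p : ℕ × ℕ // p ∈ Finset.HasAntidiagonal.antidiagonal n }) =>
        L σ.2 := (Finset.HasAntidiagonal.sigmaAntidiagonalEquivProd (A := ℕ)).summable_iff.mpr hLsum
    calc (∑' n : ℕ, ∑ p ∈ Finset.HasAntidiagonal.antidiagonal n, L p)
        = ∑' n : ℕ, ∑' p : { p : ℕ × ℕ // p ∈ Finset.HasAntidiagonal.antidiagonal n }, L p :=
          tsum_congr fun n => (Finset.tsum_subtype _ L).symm
      _ = ∑' σ : (Σ n : ℕ, { p : ℕ × ℕ // p ∈ Finset.HasAntidiagonal.antidiagonal n }), L σ.2 :=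
          (Summable.tsum_sigma hσ).symm
      _ = ∑' p : ℕ × ℕ, L p := Finset.HasAntidiagonal.sigmaAntidiagonalEquivProd.tsum_eq L
  have hL3 : (∑' p : ℕ × ℕ, L p) = ∑' i : ℕ, ∑' m : ℕ, L (m, i) := by
    have hswap : Summable fun q : ℕ × ℕ => L (q.2, q.1) :=
      ((Equiv.prodComm ℕ ℕ).summable_iff).mpr hLsum
    calc (∑' p : ℕ × ℕ, L p) = ∑' q : ℕ × ℕ, L (q.2, q.1) :=
          ((Equiv.prodComm ℕ ℕ).tsum_eq L).symm
      _ = ∑' i : ℕ, ∑' m : ℕ, L (m, i) := Summable.tsum_prod' hswap hswap.prod_factor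
  -- key finite identity
  have hkey : ∀ i m : ℕ, (∑ kl ∈ Finset.HasAntidiagonal.antidiagonal m, E kl.1 * T (kl.2, i)) = L (m, i) := by
    intro i m
    rw [Finset.Nat.sum_antidiagonal_eq_sum_range_succ_mk, ← Finset.sum_range_reflect]
    have hstep : ∀ j ∈ Finset.range (m + 1),
        E (m + 1 - 1 - j) * T (m - (m + 1 - 1 - j), i)
        = (x ^ m * y ^ i * poch a i / (poch b (m + i) * (m ! : ℂ) * (i ! : ℂ))) *
          ((-1:ℂ)^j * (m.choose j : ℂ) * poch ((b + (i:ℂ)) - (a + (i:ℂ))) j *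
            poch ((b + (i:ℂ)) + (j:ℂ)) (m - j)) := by
      intro j hj
      have hjm : j ≤ m := Nat.lt_succ_iff.mp (Finset.mem_range.mp hj)
      have e0 : m + 1 - 1 - j = m - j := by omega
      have e1 : m - (m - j) = j := by omega
      rw [e0, e1]
      have hEv : E (m - j) = x ^ (m - j) / (((m - j)! : ℕ) : ℂ) := rfl
      have hTv : T (j, i) = poch (b - a) j / poch b j * (((-1:ℂ)^j * x ^ j) / (j ! : ℂ)) *
          (poch a i / poch (b + (j:ℂ)) i * y ^ i / (i ! : ℂ)) := by
        simp only [hT]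
        rw [neg_pow]
      have hxm : x ^ (m - j) * x ^ j = x ^ m := by rw [← pow_add]; congr 1; omega
      have hch : (m.choose j : ℂ) = (m ! : ℂ) / ((j ! : ℂ) * ((m - j)! : ℂ)) :=
        Nat.cast_choose ℂ hjm
      have hsplit : poch b (m + i) = poch b j * poch (b + (j:ℂ)) i *
          poch ((b + (i:ℂ)) + (j:ℂ)) (m - j) := by
        have h1 : m + i = (j + i) + (m - j) := by omega
        rw [h1, poch_add, poch_add]
        have h2 : b + ((j + i : ℕ) : ℂ) = (b + (i:ℂ)) + (j:ℂ) := by push_cast; ring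
        rw [h2]
      have hd : (b + (i:ℂ)) - (a + (i:ℂ)) = b - a := by ring
      have p3 : poch ((b + (i:ℂ)) + (j:ℂ)) (m - j) ≠ 0 := by
        intro h
        apply hBne (m + i)
        rw [hsplit, h, mul_zero]
      rw [hEv, hTv, hd, hch, hsplit, ← hxm]
      exact frac_id (x^(m-j)) (x^j) (y^i) (poch a i) (poch (b-a) j) ((-1:ℂ)^j)
        (poch b j) (poch (b + (j:ℂ)) i) (poch ((b + (i:ℂ)) + (j:ℂ)) (m-j))
        ((j ! : ℕ) : ℂ) ((i ! : ℕ) : ℂ) (((m-j)! : ℕ) : ℂ) ((m ! : ℕ) : ℂ)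
        (hBne j) (hBJne j i) p3 (fact_ne j) (fact_ne i) (fact_ne (m-j)) (fact_ne m)
    rw [Finset.sum_congr rfl hstep, ← Finset.mul_sum, vand m (b + (i:ℂ)) (a + (i:ℂ))]
    have hLmi : L (m, i) = poch a (m + i) / poch b (m + i) * (x ^ m * y ^ i) /
        ((m ! : ℂ) * (i ! : ℂ)) := rfl
    have h1 : poch a (m + i) = poch a i * poch (a + (i:ℂ)) m := by
      rw [show m + i = i + m by omega, poch_add]
    rw [hLmi, h1]
    exact frac_id2 (x^m) (y^i) (poch a i) (poch (a + (i:ℂ)) m) (poch b (m+i))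
      ((m ! : ℕ) : ℂ) ((i ! : ℕ) : ℂ) (hBne (m+i)) (fact_ne m) (fact_ne i)
  -- assemble
  rw [hL1, hL2, hL3, hstep1, ← tsum_mul_left]
  refine tsum_congr fun i => ?_
  rw [hstep2 i]
  exact tsum_congr fun m => (hkey i m).symm
end

section
/- Absolute convergence of the double series in the ₂F₂ addition formula: for complex a₁, a₂, b₁, b₂ with b₁, b₂ not non-positive integers and any complex x, y, the double series Σ_{j₁,j₂ ≥ 0} |(b₁−a₁)_{j₁}(b₂−a₂)_{j₂}(a₂)_{j₁} / ((b₁)_{j₁}(b₂)_{j₁+j₂})| · (|x|^{j₁}/j₁!)(|x|^{j₂}/j₂!) · |₂F₂(a₁, a₂+j₁; b₁+j₁, b₂+j₁+j₂; y)| converges. -/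
open scoped BigOperators

/-- Upper bound on |(c)_n|. -/
lemma poch_abs_le (c : ℂ) (n : ℕ) :
    ‖poch c n‖ ≤ (‖c‖ + 1) ^ n * n.factorial := by
  rw [poch, norm_prod]
  calc ∏ k ∈ Finset.range n, ‖c + k‖
      ≤ ∏ k ∈ Finset.range n, (‖c‖ + 1) * ((k : ℝ) + 1) := by
        apply Finset.prod_le_prod (fun k _ => norm_nonneg _)
        intro k _
        have h1 : ‖c + k‖ ≤ ‖c‖ + k := by
          simpa using norm_add_le c k
        have hk : (0:ℝ) ≤ (k:ℝ) := Nat.cast_nonneg k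
        nlinarith [norm_nonneg c]
    _ = (‖c‖ + 1) ^ n * n.factorial := by
        rw [Finset.prod_mul_distrib, Finset.prod_const, Finset.card_range,
          ← Finset.prod_range_add_one_eq_factorial n]
        push_cast
        ring

/-- Uniform positive lower bound on |b+n|. -/
lemma exists_delta (b : ℂ) (hb : ∀ n : ℕ, b ≠ -(n : ℂ)) :
    ∃ δ : ℝ, 0 < δ ∧ ∀ n : ℕ, δ ≤ ‖b + n‖ := by
  set N : ℕ := ⌈‖b‖⌉₊ + 1 with hN
  have hNpos : (Finset.range N).Nonempty := ⟨0, by simp [hN]⟩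
  refine ⟨(Finset.range N).inf' hNpos (fun n => min 1 (‖b + n‖)), ?_, ?_⟩
  · rw [Finset.lt_inf'_iff]
    intro n _
    have : b + n ≠ 0 := by
      intro h
      exact hb n (by linear_combination h)
    simp only [lt_min_iff]
    exact ⟨one_pos, norm_pos_iff.2 this⟩
  · intro n
    by_cases h : n < N
    · have := Finset.inf'_le (s := Finset.range N)
        (fun m : ℕ => min (1:ℝ) (‖b + m‖)) (Finset.mem_range.2 h)
      exact le_trans this (min_le_right _ _)
    · push_neg at h
      have h1 : (Finset.range N).inf' hNpos (fun n => min 1 (‖b + n‖)) ≤ 1 :=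
        le_trans (Finset.inf'_le _ (Finset.mem_range.2 (Nat.pos_of_ne_zero (by simp [hN]))))
          (min_le_left _ _)
      have h2 : (1:ℝ) ≤ ‖b + n‖ := by
        have h3 : (N:ℝ) ≤ n := Nat.cast_le.2 h
        have h4 : ‖b‖ + 1 ≤ (N:ℝ) := by
          have := Nat.le_ceil (‖b‖)
          push_cast [hN]
          linarith
        have h5 : ((n:ℝ)) - ‖b‖ ≤ ‖b + n‖ := by
          have := norm_sub_norm_le ((n:ℂ)) (-b)
          simp only [norm_neg, sub_neg_eq_add] at this
          simpa [add_comm, Complex.norm_natCast] using this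
        linarith
      linarith

/-- Reverse triangle: n - |b| ≤ |b+n|. -/
lemma sub_abs_le_abs_add (b : ℂ) (n : ℕ) : (n:ℝ) - ‖b‖ ≤ ‖b + n‖ := by
  have := norm_sub_norm_le ((n:ℂ)) (-b)
  simp only [norm_neg, sub_neg_eq_add] at this
  simpa [add_comm, Complex.norm_natCast] using this

/-- Linear lower bound: ∃ E ≥ 1, (n+1)/E ≤ |b+n| for all n. -/
lemma exists_E (b : ℂ) (hb : ∀ n : ℕ, b ≠ -(n : ℂ)) :
    ∃ E : ℝ, 1 ≤ E ∧ ∀ n : ℕ, ((n:ℝ) + 1) / E ≤ ‖b + n‖ := by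
  obtain ⟨δ, hδ, hlb⟩ := exists_delta b hb
  refine ⟨max 2 ((2 * ‖b‖ + 2) / δ), le_trans one_le_two (le_max_left _ _), ?_⟩
  intro n
  set E := max 2 ((2 * ‖b‖ + 2) / δ) with hE
  have hEpos : (0:ℝ) < E := lt_of_lt_of_le two_pos (le_max_left _ _)
  by_cases h : (n:ℝ) ≤ 2 * ‖b‖ + 1
  · have h1 : ((n:ℝ) + 1) / E ≤ (2 * ‖b‖ + 2) / E :=
      div_le_div_of_nonneg_right (by linarith) hEpos.le
    have h2 : (2 * ‖b‖ + 2) / E ≤ δ := by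
      rw [div_le_iff₀ hEpos]
      have : (2 * ‖b‖ + 2) / δ ≤ E := le_max_right _ _
      calc 2 * ‖b‖ + 2 = ((2 * ‖b‖ + 2) / δ) * δ := by
            field_simp
        _ ≤ E * δ := by
            apply mul_le_mul_of_nonneg_right this (le_of_lt hδ)
        _ = δ * E := mul_comm _ _
    exact le_trans (le_trans h1 h2) (hlb n)
  · push_neg at h
    have h1 : ((n:ℝ) + 1) / E ≤ ((n:ℝ) + 1) / 2 :=
      div_le_div_of_nonneg_left (by positivity) two_pos (le_max_left _ _)
    have h2 : ((n:ℝ) + 1) / 2 ≤ (n:ℝ) - ‖b‖ := by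
      have hb0 := norm_nonneg b
      nlinarith
    exact le_trans h1 (le_trans h2 (sub_abs_le_abs_add b n))

/-- Factorial lower bound on shifted Pochhammer, uniform in the shift. -/
lemma poch_abs_ge (b : ℂ) {E : ℝ} (hE : 1 ≤ E)
    (h : ∀ n : ℕ, ((n:ℝ) + 1) / E ≤ ‖b + n‖) (m n : ℕ) :
    (n.factorial : ℝ) / E ^ n ≤ ‖poch (b + (m:ℂ)) n‖ := by
  have hEpos : (0:ℝ) < E := lt_of_lt_of_le one_pos hE
  rw [poch, norm_prod]
  calc (n.factorial : ℝ) / E ^ n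
      = ∏ k ∈ Finset.range n, ((k:ℝ) + 1) / E := by
        rw [Finset.prod_div_distrib, Finset.prod_const, Finset.card_range,
          ← Finset.prod_range_add_one_eq_factorial n]
        push_cast
        ring
    _ ≤ ∏ k ∈ Finset.range n, ‖b + (m:ℂ) + k‖ := by
        apply Finset.prod_le_prod (fun k _ => by positivity)
        intro k _
        have h1 : ((k:ℝ) + 1) / E ≤ (((m + k : ℕ):ℝ) + 1) / E := by
          gcongr
          push_cast; linarith [Nat.cast_nonneg (α := ℝ) m]
        have h2 := h (m + k)
        have h3 : b + ((m + k : ℕ):ℂ) = b + (m:ℂ) + (k:ℂ) := by push_cast; ring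
        rw [h3] at h2
        exact le_trans h1 h2

/-- Comparison |a + n| ≤ M |b + n| uniformly. -/
lemma exists_ratio (a b : ℂ) (hb : ∀ n : ℕ, b ≠ -(n : ℂ)) :
    ∃ M : ℝ, 0 < M ∧ ∀ n : ℕ, ‖a + n‖ ≤ M * ‖b + n‖ := by
  obtain ⟨δ, hδ, hlb⟩ := exists_delta b hb
  refine ⟨max ((‖a‖ + 2 * ‖b‖ + 1) / δ) (1 + ‖a‖ + ‖b‖),
    lt_of_lt_of_le (by positivity) (le_max_right _ _), ?_⟩
  intro n
  set M := max ((‖a‖ + 2 * ‖b‖ + 1) / δ) (1 + ‖a‖ + ‖b‖)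
  have habs : ‖a + n‖ ≤ ‖a‖ + n := by
    simpa using norm_add_le a n
  by_cases h : (n:ℝ) ≤ 2 * ‖b‖ + 1
  · have h1 : ‖a + n‖ ≤ ‖a‖ + 2 * ‖b‖ + 1 := by linarith
    have h2 : ‖a‖ + 2 * ‖b‖ + 1 ≤ M * δ := by
      rw [← div_le_iff₀ hδ] at *
      exact le_max_left _ _
    calc ‖a + n‖ ≤ M * δ := le_trans h1 h2
      _ ≤ M * ‖b + n‖ := by
          apply mul_le_mul_of_nonneg_left (hlb n)
          exact le_of_lt (lt_of_lt_of_le (by positivity) (le_max_right _ _))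
  · push_neg at h
    have h2 : ‖a‖ + (n:ℝ) ≤ (1 + ‖a‖ + ‖b‖) * ((n:ℝ) - ‖b‖) := by
      have ha0 := norm_nonneg a
      have hb0 := norm_nonneg b
      nlinarith
    have h3 : (1 + ‖a‖ + ‖b‖) * ((n:ℝ) - ‖b‖)
        ≤ M * ‖b + n‖ := by
      apply mul_le_mul (le_max_right _ _) (sub_abs_le_abs_add b n) (by nlinarith [norm_nonneg b]) ?_
      exact le_of_lt (lt_of_lt_of_le (by positivity) (le_max_right _ _))
    linarith

/-- Termwise ratio bound for shifted Pochhammers. -/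
lemma poch_ratio_le (a b : ℂ) {M : ℝ} (hM : 0 ≤ M)
    (h : ∀ n : ℕ, ‖a + n‖ ≤ M * ‖b + n‖) (m i : ℕ) :
    ‖poch (a + (m:ℂ)) i‖ ≤ M ^ i * ‖poch (b + (m:ℂ)) i‖ := by
  rw [poch, poch, norm_prod, norm_prod]
  calc ∏ k ∈ Finset.range i, ‖a + (m:ℂ) + k‖
      ≤ ∏ k ∈ Finset.range i, M * ‖b + (m:ℂ) + k‖ := by
        apply Finset.prod_le_prod (fun k _ => norm_nonneg _)
        intro k _
        have h1 : a + (m:ℂ) + k = a + ((m + k : ℕ):ℂ) := by push_cast; ring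
        have h2 : b + (m:ℂ) + k = b + ((m + k : ℕ):ℂ) := by push_cast; ring
        rw [h1, h2]
        exact h (m + k)
    _ = M ^ i * ∏ k ∈ Finset.range i, ‖b + (m:ℂ) + k‖ := by
        rw [Finset.prod_mul_distrib, Finset.prod_const, Finset.card_range]

/-- Uniform bound on the inner ₂F₂ values. -/
lemma hyp_uniform_bound (a₁ a₂ b₁ b₂ : ℂ)
    (hb₁ : ∀ n : ℕ, b₁ ≠ -(n : ℂ)) (hb₂ : ∀ n : ℕ, b₂ ≠ -(n : ℂ)) (y : ℂ) :
    ∃ H : ℝ, 0 ≤ H ∧ ∀ m n : ℕ,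
      ‖hyp [a₁, a₂ + (m : ℂ)]
        [b₁ + (m : ℂ), b₂ + ((m : ℂ) + (n : ℂ))] y‖ ≤ H := by
  obtain ⟨M, hM, hMle⟩ := exists_ratio a₂ b₁ hb₁
  obtain ⟨E₁, hE₁, hE₁le⟩ := exists_E b₁ hb₁
  obtain ⟨E₂, hE₂, hE₂le⟩ := exists_E b₂ hb₂
  set C : ℝ := (‖a₁‖ + 1) * M * E₂ * ‖y‖ with hC
  have hCnn : 0 ≤ C := by
    have := norm_nonneg a₁
    have := norm_nonneg y
    positivity
  refine ⟨∑' i : ℕ, C ^ i / i.factorial, tsum_nonneg (fun i => by positivity), ?_⟩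
  intro m n
  rw [hyp]
  apply tsum_of_norm_bounded ((Real.summable_pow_div_factorial C).hasSum)
  intro i
  simp only [List.map_cons, List.map_nil, List.prod_cons, List.prod_nil, mul_one]
  have hcast : b₂ + ((m:ℂ) + (n:ℂ)) = b₂ + ((m + n : ℕ):ℂ) := by push_cast; ring
  rw [hcast]
  simp only [norm_div, norm_mul, norm_pow]
  have hFnorm : ‖((i.factorial : ℕ) : ℂ)‖ = (i.factorial : ℝ) := by
    rw [Complex.norm_natCast]
  rw [hFnorm]
  set r1 := ‖poch a₁ i‖
  set r2 := ‖poch (a₂ + (m:ℂ)) i‖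
  set r3 := ‖poch (b₁ + (m:ℂ)) i‖
  set r4 := ‖poch (b₂ + ((m + n : ℕ):ℂ)) i‖
  set F : ℝ := (i.factorial : ℝ) with hF
  have hFpos : 0 < F := by rw [hF]; exact_mod_cast Nat.factorial_pos i
  have h1 : r1 ≤ (‖a₁‖ + 1) ^ i * F := by
    simpa only using poch_abs_le a₁ i
  have h2 : r2 ≤ M ^ i * r3 := by
    simpa only using poch_ratio_le a₂ b₁ hM.le hMle m i
  have h3 : F / E₁ ^ i ≤ r3 := by
    simpa only using poch_abs_ge b₁ hE₁ hE₁le m i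
  have h4 : F / E₂ ^ i ≤ r4 := by
    rw [hF]; simpa only using poch_abs_ge b₂ hE₂ hE₂le (m + n) i
  have hE₂pos : (0:ℝ) < E₂ ^ i := pow_pos (lt_of_lt_of_le one_pos hE₂) i
  have hr3pos : 0 < r3 := lt_of_lt_of_le (by positivity) h3
  have hr4pos : 0 < r4 := lt_of_lt_of_le (by positivity) h4
  have hr1 : 0 ≤ r1 := norm_nonneg _
  have hr2 : 0 ≤ r2 := norm_nonneg _
  have hy : (0:ℝ) ≤ ‖y‖ := norm_nonneg _
  apply div_le_div_of_nonneg_right ?_ hFpos.le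
  rw [div_mul_eq_mul_div, div_le_iff₀ (by positivity)]
  have hF4 : F ≤ r4 * E₂ ^ i := by
    rw [div_le_iff₀ hE₂pos] at h4
    exact h4
  calc r1 * r2 * ‖y‖ ^ i
      ≤ ((‖a₁‖ + 1) ^ i * F) * (M ^ i * r3) * ‖y‖ ^ i := by
        apply mul_le_mul_of_nonneg_right _ (by positivity)
        exact mul_le_mul h1 h2 hr2 (by positivity)
    _ = (‖a₁‖ + 1) ^ i * M ^ i * ‖y‖ ^ i * r3 * F := by ring
    _ ≤ (‖a₁‖ + 1) ^ i * M ^ i * ‖y‖ ^ i * r3 * (r4 * E₂ ^ i) := by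
        apply mul_le_mul_of_nonneg_left hF4 (by positivity)
    _ = C ^ i * (r3 * r4) := by
        rw [hC]
        simp only [mul_pow]
        ring

theorem twoFtwo_addition_abs_convergence (a₁ a₂ b₁ b₂ : ℂ)
    (hb₁ : ∀ n : ℕ, b₁ ≠ -(n : ℂ)) (hb₂ : ∀ n : ℕ, b₂ ≠ -(n : ℂ)) (x y : ℂ) :
    Summable (fun j : ℕ × ℕ =>
      ‖poch (b₁ - a₁) j.1 * poch (b₂ - a₂) j.2 * poch a₂ j.1 /
          (poch b₁ j.1 * poch b₂ (j.1 + j.2))‖ *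
        (‖x‖ ^ j.1 / (Nat.factorial j.1 : ℝ)) *
        (‖x‖ ^ j.2 / (Nat.factorial j.2 : ℝ)) *
        ‖hyp [a₁, a₂ + (j.1 : ℂ)]
          [b₁ + (j.1 : ℂ), b₂ + ((j.1 : ℂ) + (j.2 : ℂ))] y‖) := by
  obtain ⟨E₁, hE₁, hE₁le⟩ := exists_E b₁ hb₁
  obtain ⟨E₂, hE₂, hE₂le⟩ := exists_E b₂ hb₂
  obtain ⟨H, hH0, hH⟩ := hyp_uniform_bound a₁ a₂ b₁ b₂ hb₁ hb₂ y
  have hE₁0 : (0:ℝ) < E₁ := lt_of_lt_of_le one_pos hE₁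
  have hE₂0 : (0:ℝ) < E₂ := lt_of_lt_of_le one_pos hE₂
  set c₁ : ℝ := ‖b₁ - a₁‖ + 1 with hc₁
  set c₂ : ℝ := ‖b₂ - a₂‖ + 1 with hc₂
  set c₃ : ℝ := ‖a₂‖ + 1 with hc₃
  have hc₁0 : (0:ℝ) < c₁ := by positivity
  have hc₂0 : (0:ℝ) < c₂ := by positivity
  have hc₃0 : (0:ℝ) < c₃ := by positivity
  set A : ℝ := c₁ * c₃ * E₁ * E₂ with hA
  set B : ℝ := c₂ * E₂ with hB
  have hA0 : (0:ℝ) < A := by positivity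
  have hB0 : (0:ℝ) < B := by positivity
  set f1 : ℕ → ℝ := fun n => (A * ‖x‖) ^ n / n.factorial with hf1
  set f2 : ℕ → ℝ := fun n => (B * ‖x‖) ^ n / n.factorial with hf2
  have hx0 : (0:ℝ) ≤ ‖x‖ := norm_nonneg x
  have s1 : Summable f1 := Real.summable_pow_div_factorial _
  have s2 : Summable f2 := Real.summable_pow_div_factorial _
  have f1nn : 0 ≤ f1 := fun n => by positivity
  have f2nn : 0 ≤ f2 := fun n => by positivity
  have sbound : Summable (fun j : ℕ × ℕ => H * (f1 j.1 * f2 j.2)) :=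
    (s1.mul_of_nonneg s2 f1nn f2nn).mul_left H
  apply Summable.of_nonneg_of_le ?_ ?_ sbound
  · intro j
    have h1 := norm_nonneg (poch (b₁ - a₁) j.1 * poch (b₂ - a₂) j.2 * poch a₂ j.1 /
      (poch b₁ j.1 * poch b₂ (j.1 + j.2)))
    have h2 := norm_nonneg (hyp [a₁, a₂ + (j.1 : ℂ)]
      [b₁ + (j.1 : ℂ), b₂ + ((j.1 : ℂ) + (j.2 : ℂ))] y)
    have h3 : (0:ℝ) ≤ ‖x‖ ^ j.1 / (Nat.factorial j.1 : ℝ) := by positivity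
    have h4 : (0:ℝ) ≤ ‖x‖ ^ j.2 / (Nat.factorial j.2 : ℝ) := by positivity
    exact mul_nonneg (mul_nonneg (mul_nonneg h1 h3) h4) h2
  · rintro ⟨j₁, j₂⟩
    simp only
    set F₁ : ℝ := (Nat.factorial j₁ : ℝ) with hF₁
    set F₂ : ℝ := (Nat.factorial j₂ : ℝ) with hF₂
    have hF₁0 : (0:ℝ) < F₁ := by rw [hF₁]; exact_mod_cast Nat.factorial_pos j₁
    have hF₂0 : (0:ℝ) < F₂ := by rw [hF₂]; exact_mod_cast Nat.factorial_pos j₂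
    -- numerator bounds
    have hq1 : ‖poch (b₁ - a₁) j₁‖ ≤ c₁ ^ j₁ * F₁ := poch_abs_le _ _
    have hq2 : ‖poch (b₂ - a₂) j₂‖ ≤ c₂ ^ j₂ * F₂ := poch_abs_le _ _
    have hq3 : ‖poch a₂ j₁‖ ≤ c₃ ^ j₁ * F₁ := poch_abs_le _ _
    -- denominator bounds
    have hq4 : F₁ / E₁ ^ j₁ ≤ ‖poch b₁ j₁‖ := by
      have := poch_abs_ge b₁ hE₁ hE₁le 0 j₁
      simpa using this
    have hq5 : F₁ * F₂ / E₂ ^ (j₁ + j₂) ≤ ‖poch b₂ (j₁ + j₂)‖ := by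
      have h := poch_abs_ge b₂ hE₂ hE₂le 0 (j₁ + j₂)
      have hfac : F₁ * F₂ ≤ ((j₁ + j₂).factorial : ℝ) := by
        rw [hF₁, hF₂]
        exact_mod_cast Nat.le_of_dvd (Nat.factorial_pos _)
          (Nat.factorial_mul_factorial_dvd_factorial_add j₁ j₂)
      calc F₁ * F₂ / E₂ ^ (j₁ + j₂) ≤ ((j₁ + j₂).factorial : ℝ) / E₂ ^ (j₁ + j₂) :=
            div_le_div_of_nonneg_right hfac (by positivity)
        _ ≤ ‖poch b₂ (j₁ + j₂)‖ := by simpa using h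
    have hq40 : 0 < ‖poch b₁ j₁‖ := lt_of_lt_of_le (by positivity) hq4
    have hq50 : 0 < ‖poch b₂ (j₁ + j₂)‖ := lt_of_lt_of_le (by positivity) hq5
    have hQ : ‖poch (b₁ - a₁) j₁ * poch (b₂ - a₂) j₂ * poch a₂ j₁ /
        (poch b₁ j₁ * poch b₂ (j₁ + j₂))‖ ≤ A ^ j₁ * B ^ j₂ := by
      rw [norm_div, norm_mul, norm_mul, norm_mul]
      rw [div_le_iff₀ (by positivity)]
      calc ‖poch (b₁ - a₁) j₁‖ * ‖poch (b₂ - a₂) j₂‖ *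
            ‖poch a₂ j₁‖
          ≤ (c₁ ^ j₁ * F₁) * (c₂ ^ j₂ * F₂) * (c₃ ^ j₁ * F₁) := by
            apply mul_le_mul (mul_le_mul hq1 hq2 (norm_nonneg _) (by positivity)) hq3
              (norm_nonneg _) (by positivity)
        _ = A ^ j₁ * B ^ j₂ * ((F₁ / E₁ ^ j₁) * (F₁ * F₂ / E₂ ^ (j₁ + j₂))) := by
            rw [hA, hB]
            simp only [mul_pow, pow_add]
            field_simp
        _ ≤ A ^ j₁ * B ^ j₂ * (‖poch b₁ j₁‖ * ‖poch b₂ (j₁ + j₂)‖) := by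
            apply mul_le_mul_of_nonneg_left _ (by positivity)
            exact mul_le_mul hq4 hq5 (by positivity) (norm_nonneg _)
    have hHy := hH j₁ j₂
    calc ‖poch (b₁ - a₁) j₁ * poch (b₂ - a₂) j₂ * poch a₂ j₁ /
          (poch b₁ j₁ * poch b₂ (j₁ + j₂))‖ *
        (‖x‖ ^ j₁ / F₁) * (‖x‖ ^ j₂ / F₂) *
        ‖hyp [a₁, a₂ + (j₁ : ℂ)] [b₁ + (j₁ : ℂ), b₂ + ((j₁ : ℂ) + (j₂ : ℂ))] y‖
        ≤ (A ^ j₁ * B ^ j₂) * (‖x‖ ^ j₁ / F₁) * (‖x‖ ^ j₂ / F₂) * H := by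
          apply mul_le_mul (mul_le_mul (mul_le_mul hQ le_rfl (by positivity) (by positivity))
            le_rfl (by positivity) (by positivity)) hHy (norm_nonneg _) (by positivity)
      _ = H * (f1 j₁ * f2 j₂) := by
          rw [hf1, hf2]
          simp only [mul_pow]
          ring
end
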